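/- Let (A,V,χ,F,ν) be a crossed product system with preunit and assume F is a cocycle satisfying the twisted module condition. Then j'_ν is left and right A-linear (j'_ν(ab) = a·j'_ν(b) = j'_ν(a)·b for all a,b ∈ A), multiplicative for μ_𝓔 (j'_ν(ab) = μ_𝓔(j'_ν(a)⊗j'_ν(b))), and j'_ν(A) ⊆ E := A×V; moreover j_ν(a) = j'_ν(a) for all a ∈ A, and j_ν : A → E is a unital algebra homomorphism: j_ν(1_A) = ν(1) and j_ν(ab) = μ_E(j_ν(a)⊗j_ν(b)) for all a,b ∈ A, where μ_E is the restriction and corestriction of μ_𝓔 to A×V. -/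
import Mathlib


open TensorProduct

noncomputable section

namespace WeakCrossedProduct

variable {k : Type*} [Field k]
variable {A : Type*} [Ring A] [Algebra k A]
variable {V : Type*} [AddCommGroup V] [Module k V]

/-- The map `A ⊗ₖ (A ⊗ₖ V) → A ⊗ₖ V`, `a ⊗ x ↦ a • x`, i.e. `μ_A ⊗ id_V`. -/
def actMap : A ⊗[k] (A ⊗[k] V) →ₗ[k] A ⊗[k] V :=
  TensorProduct.lift (LinearMap.mk₂ k (fun (a : A) (x : A ⊗[k] V) => a • x)
    (fun a b x => add_smul a b x)
    (fun c a x => smul_assoc c a x)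
    (fun a x y => smul_add a x y)
    (fun c a x => smul_comm a c x))

/-- Given `g : V → A ⊗ V`, the map `A ⊗ V → A ⊗ V`, `a ⊗ u ↦ a • g u`. -/
def smulMap (g : V →ₗ[k] A ⊗[k] V) : A ⊗[k] V →ₗ[k] A ⊗[k] V :=
  TensorProduct.lift (LinearMap.mk₂ k (fun (a : A) (u : V) => a • g u)
    (fun a b u => add_smul a b (g u))
    (fun c a u => smul_assoc c a (g u))
    (fun a u u' => show a • g (u + u') = a • g u + a • g u' by
      rw [map_add, smul_add])
    (fun c a u => show a • g (c • u) = c • (a • g u) by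
      rw [map_smul]; exact smul_comm a c (g u)))

/-- The right action of `a' ∈ A` on `A ⊗ V`: `(a ⊗ v) · a' := a • χ (v ⊗ a')`. -/
def ract (χ : V ⊗[k] A →ₗ[k] A ⊗[k] V) (a' : A) : A ⊗[k] V →ₗ[k] A ⊗[k] V :=
  smulMap (χ ∘ₗ (TensorProduct.mk k V A).flip a')

/-- `(A,V,χ)` is a twisted space:
`χ ∘ (id_V ⊗ μ_A) = (μ_A ⊗ id_V) ∘ (id_A ⊗ χ) ∘ (χ ⊗ id_A)` (stated on pure tensors). -/
def IsTwisting (χ : V ⊗[k] A →ₗ[k] A ⊗[k] V) : Prop :=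
  ∀ (v : V) (a b : A), χ (v ⊗ₜ[k] (a * b)) = ract χ b (χ (v ⊗ₜ[k] a))

/-- `∇_χ(x) := x · 1_A`. -/
def nabla (χ : V ⊗[k] A →ₗ[k] A ⊗[k] V) : A ⊗[k] V →ₗ[k] A ⊗[k] V :=
  ract χ 1

/-- `A × V := ∇_χ(A ⊗ V)`. -/
def AxV (χ : V ⊗[k] A →ₗ[k] A ⊗[k] V) : Submodule k (A ⊗[k] V) :=
  LinearMap.range (nabla χ)

/-- `X_χ := {x ∈ A ⊗ V : x · 1_A = 0}`. -/
def Xchi (χ : V ⊗[k] A →ₗ[k] A ⊗[k] V) : Submodule k (A ⊗[k] V) :=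
  LinearMap.ker (nabla χ)

/-- `μ_𝓔 := (μ_A ⊗ id_V) ∘ (μ_A ⊗ F) ∘ (id_A ⊗ χ ⊗ id_V)`. -/
def muE (χ : V ⊗[k] A →ₗ[k] A ⊗[k] V) (F : V ⊗[k] V →ₗ[k] A ⊗[k] V) :
    (A ⊗[k] V) ⊗[k] (A ⊗[k] V) →ₗ[k] A ⊗[k] V :=
  actMap ∘ₗ
  LinearMap.lTensor A (actMap) ∘ₗ
  LinearMap.lTensor A (LinearMap.lTensor A F ∘ₗ (TensorProduct.assoc k A V V).toLinearMap) ∘ₗ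
  LinearMap.lTensor A (LinearMap.rTensor V χ) ∘ₗ
  LinearMap.lTensor A (TensorProduct.assoc k V A V).symm.toLinearMap ∘ₗ
  (TensorProduct.assoc k A V (A ⊗[k] V)).toLinearMap

/-- The twisted module condition (stated on pure tensors). -/
def TwistedModuleCond (χ : V ⊗[k] A →ₗ[k] A ⊗[k] V) (F : V ⊗[k] V →ₗ[k] A ⊗[k] V) : Prop :=
  ∀ (v w : V) (a : A),
    ract χ a (F (v ⊗ₜ[k] w)) = muE χ F (((1 : A) ⊗ₜ[k] v) ⊗ₜ[k] χ (w ⊗ₜ[k] a))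

/-- The cocycle condition (stated on pure tensors). -/
def CocycleCond (χ : V ⊗[k] A →ₗ[k] A ⊗[k] V) (F : V ⊗[k] V →ₗ[k] A ⊗[k] V) : Prop :=
  ∀ (v w u : V),
    smulMap (F ∘ₗ (TensorProduct.mk k V V).flip u) (F (v ⊗ₜ[k] w)) =
      muE χ F (((1 : A) ⊗ₜ[k] v) ⊗ₜ[k] F (w ⊗ₜ[k] u))

/-- Preunit condition (i). -/
def Preunit1 (χ : V ⊗[k] A →ₗ[k] A ⊗[k] V) (F : V ⊗[k] V →ₗ[k] A ⊗[k] V)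
    (ν : A ⊗[k] V) : Prop :=
  ∀ v : V, muE χ F (((1 : A) ⊗ₜ[k] v) ⊗ₜ[k] ν) = nabla χ ((1 : A) ⊗ₜ[k] v)

/-- Preunit condition (ii). -/
def Preunit2 (χ : V ⊗[k] A →ₗ[k] A ⊗[k] V) (F : V ⊗[k] V →ₗ[k] A ⊗[k] V)
    (ν : A ⊗[k] V) : Prop :=
  ∀ v : V, smulMap (F ∘ₗ (TensorProduct.mk k V V).flip v) ν = nabla χ ((1 : A) ⊗ₜ[k] v)

/-- Preunit condition (iii). -/
def Preunit3 (χ : V ⊗[k] A →ₗ[k] A ⊗[k] V) (ν : A ⊗[k] V) : Prop :=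
  ∀ a : A, ract χ a ν = a • ν

/-- `γ(v) := ∇_χ(1_A ⊗ v)`. -/
def gammaMap (χ : V ⊗[k] A →ₗ[k] A ⊗[k] V) : V → A ⊗[k] V :=
  fun v => nabla χ ((1 : A) ⊗ₜ[k] v)

/-- `j'_ν(a) := a · ν(1)`. -/
def jnu' (ν : A ⊗[k] V) : A → A ⊗[k] V := fun a => a • ν

/-- `j_ν(a) := ∇_χ(j'_ν(a))`. -/
def jnu (χ : V ⊗[k] A →ₗ[k] A ⊗[k] V) (ν : A ⊗[k] V) : A → A ⊗[k] V :=
  fun a => nabla χ (a • ν)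

lemma smulMap_tmul (g : V →ₗ[k] A ⊗[k] V) (a : A) (u : V) :
    smulMap g (a ⊗ₜ[k] u) = a • g u := rfl

lemma actMap_tmul (a : A) (x : A ⊗[k] V) :
    actMap (a ⊗ₜ[k] x) = a • x := rfl

lemma ract_tmul (χ : V ⊗[k] A →ₗ[k] A ⊗[k] V) (c a : A) (v : V) :
    ract χ c (a ⊗ₜ[k] v) = a • χ (v ⊗ₜ[k] c) := rfl

lemma smulMap_smul (g : V →ₗ[k] A ⊗[k] V) (a : A) (x : A ⊗[k] V) :
    smulMap g (a • x) = a • smulMap g x := by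
  induction x using TensorProduct.induction_on with
  | zero => simp
  | tmul b v =>
      rw [TensorProduct.smul_tmul', smulMap_tmul, smulMap_tmul, smul_eq_mul, mul_smul]
  | add x y hx hy => rw [smul_add, map_add, hx, hy, map_add, smul_add]

lemma ract_smul (χ : V ⊗[k] A →ₗ[k] A ⊗[k] V) (c a : A) (x : A ⊗[k] V) :
    ract χ c (a • x) = a • ract χ c x := smulMap_smul _ a x

lemma nabla_smul (χ : V ⊗[k] A →ₗ[k] A ⊗[k] V) (a : A) (x : A ⊗[k] V) :
    nabla χ (a • x) = a • nabla χ x := ract_smul χ 1 a x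

lemma ract_mul {χ : V ⊗[k] A →ₗ[k] A ⊗[k] V} (hχ : IsTwisting χ) (b c : A)
    (x : A ⊗[k] V) : ract χ (b * c) x = ract χ c (ract χ b x) := by
  induction x using TensorProduct.induction_on with
  | zero => simp
  | tmul a v => rw [ract_tmul, hχ v b c, ract_tmul, ract_smul]
  | add x y hx hy => rw [map_add, hx, hy, map_add, map_add]

lemma actMap_lTensor_assoc (F : V ⊗[k] V →ₗ[k] A ⊗[k] V) (w : V) (z : A ⊗[k] V) :
    actMap ((LinearMap.lTensor A F) ((TensorProduct.assoc k A V V) (z ⊗ₜ[k] w))) =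
      smulMap (F ∘ₗ (TensorProduct.mk k V V).flip w) z := by
  induction z using TensorProduct.induction_on with
  | zero => simp
  | tmul b u =>
      rw [TensorProduct.assoc_tmul, LinearMap.lTensor_tmul, actMap_tmul, smulMap_tmul]
      rfl
  | add x y hx hy =>
      rw [TensorProduct.add_tmul, map_add, map_add, map_add, hx, hy, map_add]

lemma muE_tmul (χ : V ⊗[k] A →ₗ[k] A ⊗[k] V) (F : V ⊗[k] V →ₗ[k] A ⊗[k] V)
    (a : A) (v : V) (c : A) (w : V) :
    muE χ F ((a ⊗ₜ[k] v) ⊗ₜ[k] (c ⊗ₜ[k] w)) =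
      a • smulMap (F ∘ₗ (TensorProduct.mk k V V).flip w) (χ (v ⊗ₜ[k] c)) := by
  simp only [muE, LinearMap.comp_apply, LinearEquiv.coe_coe, TensorProduct.assoc_tmul,
    LinearMap.lTensor_tmul, TensorProduct.assoc_symm_tmul, LinearMap.rTensor_tmul,
    actMap_tmul]
  rw [actMap_lTensor_assoc]

lemma muE_ract (χ : V ⊗[k] A →ₗ[k] A ⊗[k] V) (F : V ⊗[k] V →ₗ[k] A ⊗[k] V)
    (x : A ⊗[k] V) (c : A) (w : V) :
    muE χ F (x ⊗ₜ[k] (c ⊗ₜ[k] w)) =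
      smulMap (F ∘ₗ (TensorProduct.mk k V V).flip w) (ract χ c x) := by
  induction x using TensorProduct.induction_on with
  | zero => simp
  | tmul a v => rw [muE_tmul, ract_tmul, smulMap_smul]
  | add x y hx hy =>
      rw [TensorProduct.add_tmul, map_add, hx, hy, map_add, map_add]

lemma muE_smul_left (χ : V ⊗[k] A →ₗ[k] A ⊗[k] V) (F : V ⊗[k] V →ₗ[k] A ⊗[k] V)
    (a : A) (x y : A ⊗[k] V) :
    muE χ F ((a • x) ⊗ₜ[k] y) = a • muE χ F (x ⊗ₜ[k] y) := by
  induction y using TensorProduct.induction_on with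
  | zero => simp [TensorProduct.tmul_zero]
  | tmul c w => rw [muE_ract, muE_ract, ract_smul, smulMap_smul]
  | add y y' hy hy' =>
      rw [TensorProduct.tmul_add, TensorProduct.tmul_add, map_add, hy, hy', map_add,
        smul_add]

lemma muE_shift {χ : V ⊗[k] A →ₗ[k] A ⊗[k] V} (hχ : IsTwisting χ)
    (F : V ⊗[k] V →ₗ[k] A ⊗[k] V) (b : A) (x y : A ⊗[k] V) :
    muE χ F (x ⊗ₜ[k] (b • y)) = muE χ F ((ract χ b x) ⊗ₜ[k] y) := by
  induction y using TensorProduct.induction_on with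
  | zero => simp [TensorProduct.tmul_zero]
  | tmul c w =>
      rw [TensorProduct.smul_tmul', muE_ract, muE_ract, smul_eq_mul, ract_mul hχ]
  | add y y' hy hy' =>
      rw [smul_add, TensorProduct.tmul_add, TensorProduct.tmul_add, map_add, map_add,
        hy, hy']

lemma muE_nu {χ : V ⊗[k] A →ₗ[k] A ⊗[k] V} {F : V ⊗[k] V →ₗ[k] A ⊗[k] V}
    {ν : A ⊗[k] V} (hν1 : Preunit1 χ F ν) (x : A ⊗[k] V) :
    muE χ F (x ⊗ₜ[k] ν) = nabla χ x := by
  induction x using TensorProduct.induction_on with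
  | zero => simp [TensorProduct.zero_tmul]
  | tmul a v =>
      have h : (a ⊗ₜ[k] v : A ⊗[k] V) = a • ((1 : A) ⊗ₜ[k] v) := by
        rw [TensorProduct.smul_tmul', smul_eq_mul, mul_one]
      rw [h, muE_smul_left, hν1 v, nabla_smul]
  | add x y hx hy =>
      rw [TensorProduct.add_tmul, map_add, hx, hy, map_add]

theorem statement_8 (χ : V ⊗[k] A →ₗ[k] A ⊗[k] V) (F : V ⊗[k] V →ₗ[k] A ⊗[k] V)
    (ν : A ⊗[k] V)
    (hχ : IsTwisting χ) (hF : ∀ x : V ⊗[k] V, F x ∈ AxV χ)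
    (hν1 : Preunit1 χ F ν) (hν2 : Preunit2 χ F ν) (hν3 : Preunit3 χ ν)
    (htm : TwistedModuleCond χ F) (hcoc : CocycleCond χ F) :
    (∀ a b : A, jnu' ν (a * b) = a • jnu' ν b) ∧
    (∀ a b : A, jnu' ν (a * b) = ract χ b (jnu' ν a)) ∧
    (∀ a b : A, jnu' ν (a * b) = muE χ F (jnu' ν a ⊗ₜ[k] jnu' ν b)) ∧
    (∀ a : A, jnu' ν a ∈ AxV χ) ∧
    (∀ a : A, jnu χ ν a = jnu' ν a) ∧
    jnu χ ν 1 = ν ∧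
    (∀ a b : A, jnu χ ν (a * b) = muE χ F (jnu χ ν a ⊗ₜ[k] jnu χ ν b)) := by
  have hnu : nabla χ ν = ν := by
    have := hν3 1
    rw [one_smul] at this
    exact this
  have h1 : ∀ a b : A, jnu' ν (a * b) = a • jnu' ν b := fun a b => mul_smul a b ν
  have h3 : ∀ a b : A, jnu' ν (a * b) = muE χ F (jnu' ν a ⊗ₜ[k] jnu' ν b) := by
    intro a b
    show (a * b) • ν = muE χ F ((a • ν) ⊗ₜ[k] (b • ν))
    rw [muE_smul_left, muE_shift hχ, hν3 b, muE_smul_left, muE_nu hν1, hnu,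
      ← mul_smul]
  have h5 : ∀ a : A, jnu χ ν a = jnu' ν a := by
    intro a
    show nabla χ (a • ν) = a • ν
    rw [nabla_smul, hnu]
  refine ⟨h1, ?_, h3, ?_, h5, ?_, ?_⟩
  · intro a b
    show (a * b) • ν = ract χ b (a • ν)
    rw [ract_smul, hν3 b, mul_smul]
  · intro a
    exact ⟨a • ν, by rw [nabla_smul, hnu]; rfl⟩
  · rw [h5, jnu', one_smul]
  · intro a b
    rw [h5, h5, h5, h3]

end WeakCrossedProduct
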